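/- Lemma 5 (one-step contraction with bounded gradient error, deterministic form): Let E be a complete real inner product space and f : E → ℝ be differentiable with gradient ∇f Lipschitz continuous with constant L > 0. Assume f attains its minimum at w* ∈ E and satisfies the Polyak–Łojasiewicz inequality 2μ·(f(x) − f(w*)) ≤ ‖∇f(x)‖² for all x ∈ E, where μ > 0. Let ρ be a real number with 0 < ρ ≤ μ/L, let w, e ∈ E satisfy ‖e‖² ≤ 2L·(μ/L − ρ)·(f(w) − f(w*)), and set w⁺ = w − (1/L)·(∇f(w) + e). Then f(w⁺) − f(w*) ≤ (1 − ρ)·(f(w) − f(w*)). -/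

import Mathlib

/-!
The descent lemma for an `L`-smooth `f` gives
`f w⁺ ≤ f w + (‖e‖² - ‖∇f w‖²) / (2L)`. The PL inequality turns `-‖∇f w‖² / (2L)` into at
most `-(μ/L) (f w - f w*)`, while the error budget contributes at most `(μ/L - ρ) (f w - f w*)`.
-/

open InnerProductSpace
open scoped RealInnerProductSpace NNReal

section Descent

variable {E : Type*} [NormedAddCommGroup E] [InnerProductSpace ℝ E]

theorem HasGradientAt.hasDerivAt_comp_add_smul [CompleteSpace E] {f : E → ℝ} {g x v : E}
    {t : ℝ} (hf : HasGradientAt f g (x + t • v)) :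
    HasDerivAt (fun s : ℝ => f (x + s • v)) ⟪g, v⟫ t := by
  have hline : HasDerivAt (fun s : ℝ => x + s • v) v t := by
    simpa using ((hasDerivAt_id t).smul_const v).const_add x
  simpa [toDual_apply_apply, Function.comp_def] using
    hf.hasFDerivAt.comp_hasDerivAt t hline

theorem LipschitzWith.inner_sub_le {K : ℝ≥0} {g : E → E} (hg : LipschitzWith K g)
    (x v : E) {t : ℝ} (ht : 0 ≤ t) :
    ⟪g (x + t • v) - g x, v⟫ ≤ K * t * ‖v‖ ^ 2 :=
  calc ⟪g (x + t • v) - g x, v⟫ ≤ ‖g (x + t • v) - g x‖ * ‖v‖ := real_inner_le_norm _ _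
    _ ≤ K * ‖t • v‖ * ‖v‖ := by
        gcongr
        simpa [dist_eq_norm] using hg.dist_le_mul (x + t • v) x
    _ = K * t * ‖v‖ ^ 2 := by rw [norm_smul, Real.norm_of_nonneg ht]; ring

theorem descent_lemma [CompleteSpace E] {f : E → ℝ} {f' : E → E} {K : ℝ≥0}
    (hgrad : ∀ x, HasGradientAt f (f' x) x) (hlip : LipschitzWith K f') (x v : E) :
    f (x + v) ≤ f x + ⟪f' x, v⟫ + K / 2 * ‖v‖ ^ 2 := by
  set gap : ℝ → ℝ := fun t => f x + t * ⟪f' x, v⟫ + K / 2 * ‖v‖ ^ 2 * t ^ 2 - f (x + t • v)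
  have hgap : ∀ t, HasDerivAt gap
      (⟪f' x, v⟫ + K / 2 * ‖v‖ ^ 2 * (2 * t) - ⟪f' (x + t • v), v⟫) t := fun t =>
    ((((hasDerivAt_id t).mul_const _).const_add _).add
      ((hasDerivAt_pow 2 t).const_mul _)).sub
      (hgrad _).hasDerivAt_comp_add_smul |>.congr_deriv (by simp)
  have hmono : MonotoneOn gap (Set.Icc 0 1) := by
    refine monotoneOn_of_hasDerivWithinAt_nonneg (convex_Icc 0 1)
      (fun t _ => (hgap t).continuousAt.continuousWithinAt)
      (fun t _ => (hgap t).hasDerivWithinAt) fun t ht => ?_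
    rw [interior_Icc] at ht
    have := hlip.inner_sub_le x v ht.1.le
    rw [inner_sub_left] at this
    linarith
  have := hmono (Set.left_mem_Icc.mpr zero_le_one) (Set.right_mem_Icc.mpr zero_le_one) zero_le_one
  simp only [gap, zero_smul, add_zero, one_smul, zero_mul, mul_one, one_pow] at this
  linarith

theorem inner_neg_smul_add_half_norm_sq (g e : E) {L : ℝ} (hL : L ≠ 0) :
    ⟪g, -((1 / L) • (g + e))⟫ + L / 2 * ‖-((1 / L) • (g + e))‖ ^ 2 =
      (‖e‖ ^ 2 - ‖g‖ ^ 2) / (2 * L) := by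
  have hexp := norm_sub_sq_real (g + e) g
  rw [add_sub_cancel_left] at hexp
  rw [norm_neg, norm_smul, inner_neg_right, real_inner_smul_right, mul_pow, Real.norm_eq_abs,
    sq_abs, hexp, real_inner_comm]
  field_simp
  ring

theorem inexact_gradient_step_le [CompleteSpace E] {f : E → ℝ} {f' : E → E} {L : ℝ}
    (hL : 0 < L) (hgrad : ∀ x, HasGradientAt f (f' x) x) (hlip : LipschitzWith (Real.toNNReal L) f')
    (w e : E) :
    f (w - (1 / L) • (f' w + e)) ≤ f w + (‖e‖ ^ 2 - ‖f' w‖ ^ 2) / (2 * L) := by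
  have := descent_lemma hgrad hlip w (-((1 / L) • (f' w + e)))
  rwa [← sub_eq_add_neg, Real.coe_toNNReal _ hL.le, add_assoc,
    inner_neg_smul_add_half_norm_sq _ _ hL.ne'] at this

end Descent

theorem one_step_contraction_general
    {E : Type*} [NormedAddCommGroup E] [InnerProductSpace ℝ E] [CompleteSpace E]
    (f : E → ℝ) (f' : E → E) (L : ℝ) (hL : 0 < L)
    (hgrad : ∀ x : E, HasGradientAt f (f' x) x)
    (hlip : LipschitzWith (Real.toNNReal L) f')
    (μ : ℝ) (wstar : E)
    (hPL : ∀ x : E, 2 * μ * (f x - f wstar) ≤ ‖f' x‖ ^ 2)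
    (ρ : ℝ)
    (w e : E) (he : ‖e‖ ^ 2 ≤ 2 * L * (μ / L - ρ) * (f w - f wstar)) :
    f (w - (1 / L) • (f' w + e)) - f wstar ≤ (1 - ρ) * (f w - f wstar) := by
  have hstep := inexact_gradient_step_le hL hgrad hlip w e
  have hPLw := hPL w
  have hμL : L * (μ / L) = μ := mul_div_cancel₀ μ hL.ne'
  have hdiv : (‖e‖ ^ 2 - ‖f' w‖ ^ 2) / (2 * L) ≤ -ρ * (f w - f wstar) := by
    rw [div_le_iff₀ (by positivity)]
    linear_combination he + hPLw + 2 * (f w - f wstar) * hμL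
  linarith

/-- Lemma 5 (one-step contraction with bounded gradient error, deterministic form). -/
theorem one_step_contraction
    {E : Type*} [NormedAddCommGroup E] [InnerProductSpace ℝ E] [CompleteSpace E]
    (f : E → ℝ) (f' : E → E) (L : ℝ) (hL : 0 < L)
    (hgrad : ∀ x : E, HasGradientAt f (f' x) x)
    (hlip : LipschitzWith (Real.toNNReal L) f')
    (μ : ℝ) (hμ : 0 < μ) (wstar : E)
    (hmin : ∀ x : E, f wstar ≤ f x)
    (hPL : ∀ x : E, 2 * μ * (f x - f wstar) ≤ ‖f' x‖ ^ 2)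
    (ρ : ℝ) (hρ0 : 0 < ρ) (hρ : ρ ≤ μ / L)
    (w e : E) (he : ‖e‖ ^ 2 ≤ 2 * L * (μ / L - ρ) * (f w - f wstar)) :
    f (w - (1 / L) • (f' w + e)) - f wstar ≤ (1 - ρ) * (f w - f wstar) :=
  one_step_contraction_general f f' L hL hgrad hlip μ wstar hPL ρ w e he
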